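/- There exist a neighborhood V ⊆ ℝ^5 of the parameter point (ε, ω, γ, p₁, q₁) = (0, 1, 0, 1, 0), a neighborhood W ⊆ ℝ^{2(N−1)} of 0, and a C^∞ map Φ : V → ℝ^{2(N−1)} with Φ(0,1,0,1,0) = 0, such that for every v ∈ V: Φ(v) ∈ W, F(Φ(v); v) = 0, and Φ(v) is the unique point of W at which F(·; v) vanishes. -/

import Mathlib

set_option maxHeartbeats 1000000

/-- The map `F` from Appendix A: the components `(f₂,…,f_N, f_{N+2},…,f_{2N})` of the
stationarity equations, as a function of `(p₂,…,p_N, q₂,…,q_N)` with parameters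
`ε, ω, γ, p₁, q₁`.  Index `k : Fin (N-1)` corresponds to site `j = k + 2`. -/
def Fmap (N : ℕ) (ε ω γ p1 q1 : ℝ)
    (u : (Fin (N - 1) → ℝ) × (Fin (N - 1) → ℝ)) :
    (Fin (N - 1) → ℝ) × (Fin (N - 1) → ℝ) :=
  (fun k =>
    let ql : ℝ :=
      if 0 < k.val then u.2 ⟨k.val - 1, lt_of_le_of_lt (Nat.sub_le _ _) k.isLt⟩ else q1
    if h : k.val + 1 < N - 1 then
      ε * (u.2 ⟨k.val + 1, h⟩ + ql - 2 * u.2 k) + ω * u.2 k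
        - (u.1 k ^ 2 + u.2 k ^ 2) * u.2 k
    else
      ε * (ql - u.2 k) + ω * u.2 k - (u.1 k ^ 2 + u.2 k ^ 2) * u.2 k - γ * u.1 k,
   fun k =>
    let pl : ℝ :=
      if 0 < k.val then u.1 ⟨k.val - 1, lt_of_le_of_lt (Nat.sub_le _ _) k.isLt⟩ else p1
    if h : k.val + 1 < N - 1 then
      -(ε * (u.1 ⟨k.val + 1, h⟩ + pl - 2 * u.1 k)) - ω * u.1 k
        + (u.1 k ^ 2 + u.2 k ^ 2) * u.1 k
    else
      -(ε * (pl - u.1 k)) - ω * u.1 k + (u.1 k ^ 2 + u.2 k ^ 2) * u.1 k - γ * u.2 k)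

noncomputable section StmtAux

abbrev P5' : Type := ℝ × ℝ × ℝ × ℝ × ℝ
abbrev EE' (N : ℕ) : Type := (Fin (N - 1) → ℝ) × (Fin (N - 1) → ℝ)
abbrev XX' (N : ℕ) : Type := P5' × EE' N

/-- the full map `G (v, u) = (v, F(u; v))`. -/
def Gmap (N : ℕ) (x : XX' N) : XX' N :=
  (x.1, Fmap N x.1.1 x.1.2.1 x.1.2.2.1 x.1.2.2.2.1 x.1.2.2.2.2 x.2)

/-- base point -/
def apt (N : ℕ) : XX' N := ((0, 1, 0, 1, 0), (0, 0))

lemma contDiff_G (N : ℕ) : ContDiff ℝ (⊤ : ℕ∞) (Gmap N) := by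
  apply contDiff_fst.prodMk
  unfold Fmap
  apply ContDiff.prodMk <;> (apply contDiff_pi.2; intro k) <;>
    (simp only []; split_ifs <;> fun_prop)

-- coordinate continuous linear maps
def cE (N : ℕ) : XX' N →L[ℝ] ℝ :=
  (ContinuousLinearMap.fst ℝ ℝ (ℝ × ℝ × ℝ × ℝ)).comp (ContinuousLinearMap.fst ℝ P5' (EE' N))
def cW (N : ℕ) : XX' N →L[ℝ] ℝ :=
  ((ContinuousLinearMap.fst ℝ ℝ (ℝ × ℝ × ℝ)).comp
    (ContinuousLinearMap.snd ℝ ℝ (ℝ × ℝ × ℝ × ℝ))).comp (ContinuousLinearMap.fst ℝ P5' (EE' N))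
def cG (N : ℕ) : XX' N →L[ℝ] ℝ :=
  (((ContinuousLinearMap.fst ℝ ℝ (ℝ × ℝ)).comp
    (ContinuousLinearMap.snd ℝ ℝ (ℝ × ℝ × ℝ))).comp
      (ContinuousLinearMap.snd ℝ ℝ (ℝ × ℝ × ℝ × ℝ))).comp (ContinuousLinearMap.fst ℝ P5' (EE' N))
def cP1 (N : ℕ) : XX' N →L[ℝ] ℝ :=
  ((((ContinuousLinearMap.fst ℝ ℝ ℝ).comp
    (ContinuousLinearMap.snd ℝ ℝ (ℝ × ℝ))).comp
      (ContinuousLinearMap.snd ℝ ℝ (ℝ × ℝ × ℝ))).comp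
        (ContinuousLinearMap.snd ℝ ℝ (ℝ × ℝ × ℝ × ℝ))).comp
          (ContinuousLinearMap.fst ℝ P5' (EE' N))
def cQ1 (N : ℕ) : XX' N →L[ℝ] ℝ :=
  ((((ContinuousLinearMap.snd ℝ ℝ ℝ).comp
    (ContinuousLinearMap.snd ℝ ℝ (ℝ × ℝ))).comp
      (ContinuousLinearMap.snd ℝ ℝ (ℝ × ℝ × ℝ))).comp
        (ContinuousLinearMap.snd ℝ ℝ (ℝ × ℝ × ℝ × ℝ))).comp
          (ContinuousLinearMap.fst ℝ P5' (EE' N))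
def cP (N : ℕ) (k : Fin (N - 1)) : XX' N →L[ℝ] ℝ :=
  ((ContinuousLinearMap.proj k).comp
    (ContinuousLinearMap.fst ℝ (Fin (N - 1) → ℝ) (Fin (N - 1) → ℝ))).comp
      (ContinuousLinearMap.snd ℝ P5' (EE' N))
def cQ (N : ℕ) (k : Fin (N - 1)) : XX' N →L[ℝ] ℝ :=
  ((ContinuousLinearMap.proj k).comp
    (ContinuousLinearMap.snd ℝ (Fin (N - 1) → ℝ) (Fin (N - 1) → ℝ))).comp
      (ContinuousLinearMap.snd ℝ P5' (EE' N))

def dD2 (N : ℕ) (k : Fin (N - 1)) : XX' N →L[ℝ] ℝ :=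
  -(cP N k) - (if 0 < k.val then 0 else cE N)

/-- the derivative of `G` at the base point, as a continuous linear map. -/
def Dmap (N : ℕ) : XX' N →L[ℝ] XX' N :=
  (ContinuousLinearMap.fst ℝ P5' (EE' N)).prod
    ((ContinuousLinearMap.pi (fun k => cQ N k)).prod
      (ContinuousLinearMap.pi (fun k => dD2 N k)))

lemma hasFDerivAt_G (N : ℕ) : HasFDerivAt (Gmap N) (Dmap N) (apt N) := by
  apply (hasFDerivAt_fst (p := apt N)).prodMk
  apply HasFDerivAt.prodMk
  · apply hasFDerivAt_pi''
    intro k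
    have hql : HasFDerivAt (fun x : XX' N =>
        if 0 < k.val then x.2.2 ⟨k.val - 1, lt_of_le_of_lt (Nat.sub_le _ _) k.isLt⟩
        else x.1.2.2.2.2)
        (if 0 < k.val then cQ N ⟨k.val - 1, lt_of_le_of_lt (Nat.sub_le _ _) k.isLt⟩ else cQ1 N)
        (apt N) := by
      by_cases hk : 0 < k.val <;> simp only [if_pos, if_neg, hk, if_true, if_false]
      · exact (cQ N _).hasFDerivAt
      · exact (cQ1 N).hasFDerivAt
    have hqla : (if 0 < k.val then cQ N ⟨k.val - 1, lt_of_le_of_lt (Nat.sub_le _ _) k.isLt⟩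
        else cQ1 N) (apt N) = 0 := by
      split_ifs <;> simp [cQ, cQ1, apt]
    rw [ContinuousLinearMap.proj_pi]
    simp only [Fmap]
    by_cases h : k.val + 1 < N - 1
    · simp only [dif_pos h, pow_two]
      refine ((((cE N).hasFDerivAt.mul (((cQ N ⟨k.val + 1, h⟩).hasFDerivAt.add hql).sub
        (((cQ N k).hasFDerivAt).const_mul 2))).add
        ((cW N).hasFDerivAt.mul (cQ N k).hasFDerivAt)).sub
        ((((cP N k).hasFDerivAt.mul (cP N k).hasFDerivAt).add ((cQ N k).hasFDerivAt.mul (cQ N k).hasFDerivAt)).mul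
          (cQ N k).hasFDerivAt)).congr_fderiv ?_
      refine ContinuousLinearMap.ext fun δ => ?_
      simp [apt, cE, cW, cQ, cP]
    · simp only [dif_neg h, pow_two]
      refine ((((cE N).hasFDerivAt.mul (hql.sub (cQ N k).hasFDerivAt)).add
        ((cW N).hasFDerivAt.mul (cQ N k).hasFDerivAt)).sub
        ((((cP N k).hasFDerivAt.mul (cP N k).hasFDerivAt).add ((cQ N k).hasFDerivAt.mul (cQ N k).hasFDerivAt)).mul
          (cQ N k).hasFDerivAt)).sub ((cG N).hasFDerivAt.mul (cP N k).hasFDerivAt)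
        |>.congr_fderiv ?_
      refine ContinuousLinearMap.ext fun δ => ?_
      simp [apt, cE, cW, cG, cQ, cP]
  · apply hasFDerivAt_pi''
    intro k
    have hpl : HasFDerivAt (fun x : XX' N =>
        if 0 < k.val then x.2.1 ⟨k.val - 1, lt_of_le_of_lt (Nat.sub_le _ _) k.isLt⟩
        else x.1.2.2.2.1)
        (if 0 < k.val then cP N ⟨k.val - 1, lt_of_le_of_lt (Nat.sub_le _ _) k.isLt⟩ else cP1 N)
        (apt N) := by
      by_cases hk : 0 < k.val <;> simp only [if_pos, if_neg, hk, if_true, if_false]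
      · exact (cP N _).hasFDerivAt
      · exact (cP1 N).hasFDerivAt
    have hpla : (if 0 < k.val then cP N ⟨k.val - 1, lt_of_le_of_lt (Nat.sub_le _ _) k.isLt⟩
        else cP1 N) (apt N) = (if 0 < k.val then (0:ℝ) else 1) := by
      split_ifs <;> simp [cP, cP1, apt]
    rw [ContinuousLinearMap.proj_pi]
    simp only [Fmap]
    by_cases h : k.val + 1 < N - 1
    · simp only [dif_pos h, pow_two]
      refine ((((cE N).hasFDerivAt.mul (((cP N ⟨k.val + 1, h⟩).hasFDerivAt.add hpl).sub
        (((cP N k).hasFDerivAt).const_mul 2))).neg.sub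
        ((cW N).hasFDerivAt.mul (cP N k).hasFDerivAt)).add
        ((((cP N k).hasFDerivAt.mul (cP N k).hasFDerivAt).add ((cQ N k).hasFDerivAt.mul (cQ N k).hasFDerivAt)).mul
          (cP N k).hasFDerivAt)).congr_fderiv ?_
      refine ContinuousLinearMap.ext fun δ => ?_
      by_cases hk : 0 < k.val <;>
        simp [apt, dD2, cE, cW, cQ, cP, hk] <;> ring
    · simp only [dif_neg h, pow_two]
      refine ((((cE N).hasFDerivAt.mul (hpl.sub (cP N k).hasFDerivAt)).neg.sub
        ((cW N).hasFDerivAt.mul (cP N k).hasFDerivAt)).add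
        ((((cP N k).hasFDerivAt.mul (cP N k).hasFDerivAt).add ((cQ N k).hasFDerivAt.mul (cQ N k).hasFDerivAt)).mul
          (cP N k).hasFDerivAt)).sub ((cG N).hasFDerivAt.mul (cQ N k).hasFDerivAt)
        |>.congr_fderiv ?_
      refine ContinuousLinearMap.ext fun δ => ?_
      by_cases hk : 0 < k.val <;>
        simp [apt, dD2, cE, cW, cG, cQ, cP, hk] <;> ring

/-- The derivative as a linear equivalence. -/
def Leq (N : ℕ) : XX' N ≃ₗ[ℝ] XX' N where
  toFun x := (x.1, (x.2.2, fun k => -x.2.1 k - if 0 < k.val then 0 else x.1.1))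
  invFun y := (y.1, (fun k => -(y.2.2 k) - if 0 < k.val then 0 else y.1.1, y.2.1))
  map_add' x y := by
    refine Prod.ext rfl (Prod.ext rfl ?_)
    funext k
    simp only [Prod.fst_add, Prod.snd_add, Pi.add_apply]
    split_ifs <;> ring
  map_smul' c x := by
    refine Prod.ext rfl (Prod.ext rfl ?_)
    funext k
    simp only [Prod.smul_fst, Prod.smul_snd, Pi.smul_apply, smul_eq_mul, RingHom.id_apply]
    split_ifs <;> ring
  left_inv x := by
    refine Prod.ext rfl (Prod.ext ?_ rfl)
    funext k
    dsimp only
    split_ifs <;> ring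
  right_inv y := by
    refine Prod.ext rfl (Prod.ext rfl ?_)
    funext k
    dsimp only
    split_ifs <;> ring

noncomputable def LeqC (N : ℕ) : XX' N ≃L[ℝ] XX' N := (Leq N).toContinuousLinearEquiv

lemma Dmap_eq (N : ℕ) : Dmap N = (LeqC N : XX' N →L[ℝ] XX' N) := by
  refine ContinuousLinearMap.ext fun δ => ?_
  refine Prod.ext rfl (Prod.ext ?_ ?_) <;> funext k <;>
    simp [Dmap, LeqC, Leq, cQ, cP, cE, dD2, LinearEquiv.coe_toContinuousLinearEquiv] <;>
    split_ifs <;> simp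

lemma hGa (N : ℕ) : Gmap N (apt N) = apt N := by
  unfold Gmap Fmap apt
  refine Prod.ext rfl (Prod.ext (funext fun k => ?_) (funext fun k => ?_)) <;>
    (dsimp only; split_ifs <;> simp)

end StmtAux

/-- The implicit function theorem applied to `F`: a locally unique, smooth branch
of zeros `Φ(v)` near the parameter point `(ε, ω, γ, p₁, q₁) = (0, 1, 0, 1, 0)`. -/
theorem stmt_4 (N : ℕ) (hN : 2 ≤ N) :
    ∃ V ∈ nhds ((0, 1, 0, 1, 0) : ℝ × ℝ × ℝ × ℝ × ℝ),
    ∃ W ∈ nhds ((0, 0) : (Fin (N - 1) → ℝ) × (Fin (N - 1) → ℝ)),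
    ∃ Φ : ℝ × ℝ × ℝ × ℝ × ℝ → (Fin (N - 1) → ℝ) × (Fin (N - 1) → ℝ),
      ContDiffOn ℝ (⊤ : ℕ∞) Φ V ∧
      Φ (0, 1, 0, 1, 0) = 0 ∧
      ∀ v ∈ V, Φ v ∈ W ∧
        Fmap N v.1 v.2.1 v.2.2.1 v.2.2.2.1 v.2.2.2.2 (Φ v) = 0 ∧
        ∀ u ∈ W, Fmap N v.1 v.2.1 v.2.2.1 v.2.2.2.1 v.2.2.2.2 u = 0 → u = Φ v := by
  classical
  have hG : ContDiffAt ℝ (⊤ : ℕ∞) (Gmap N) (apt N) := (contDiff_G N).contDiffAt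
  have hD : HasFDerivAt (Gmap N) ((LeqC N : XX' N ≃L[ℝ] XX' N) : XX' N →L[ℝ] XX' N) (apt N) :=
    (hasFDerivAt_G N).congr_fderiv (Dmap_eq N)
  set e : OpenPartialHomeomorph (XX' N) (XX' N) := hG.toOpenPartialHomeomorph _ hD (by simp) with he
  have hcoe : (e : XX' N → XX' N) = Gmap N := rfl
  have hsrc : apt N ∈ e.source := hG.mem_toOpenPartialHomeomorph_source hD (by simp)
  have htgt : apt N ∈ e.target := by
    have h := hG.image_mem_toOpenPartialHomeomorph_target hD (by simp)
    rwa [hGa] at h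
  have hsa : e.symm (apt N) = apt N := by
    have h := e.left_inv hsrc
    rw [hcoe, hGa] at h
    exact h
  have hsymm : ContDiffAt ℝ (⊤ : ℕ∞) (e.symm : XX' N → XX' N) (apt N) := by
    have h := hG.to_localInverse hD (by simp)
    rw [hGa N] at h
    exact h
  obtain ⟨U, hUmem, hUs⟩ : ∃ U ∈ nhds (apt N),
      ContDiffOn ℝ (⊤ : ℕ∞) (e.symm : XX' N → XX' N) U := by
    have hT : IsOpen ((fun x => fderiv ℝ (Gmap N) x) ⁻¹'
        Set.range ((↑) : (XX' N ≃L[ℝ] XX' N) → XX' N →L[ℝ] XX' N)) :=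
      ContinuousLinearEquiv.isOpen.preimage ((contDiff_G N).continuous_fderiv (by simp))
    refine ⟨e.target ∩ (e.symm : XX' N → XX' N) ⁻¹' ((fun x => fderiv ℝ (Gmap N) x) ⁻¹'
        Set.range ((↑) : (XX' N ≃L[ℝ] XX' N) → XX' N →L[ℝ] XX' N)), ?_, ?_⟩
    · refine (e.continuousOn_symm.isOpen_inter_preimage e.open_target hT).mem_nhds ⟨htgt, ?_⟩
      show ∃ L : XX' N ≃L[ℝ] XX' N, (L : XX' N →L[ℝ] XX' N) = fderiv ℝ (Gmap N) (e.symm (apt N))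
      rw [hsa]
      exact ⟨LeqC N, hD.fderiv.symm⟩
    · intro y hy
      obtain ⟨L, hL⟩ := hy.2
      have hd : HasFDerivAt (Gmap N) (L : XX' N →L[ℝ] XX' N) (e.symm y) := by
        rw [hL]; exact ((contDiff_G N).differentiable (by simp) _).hasFDerivAt
      exact (e.contDiffAt_symm hy.1 hd (contDiff_G N).contDiffAt).contDiffWithinAt
  obtain ⟨U', hU'sub, hU'open, hU'mem⟩ := mem_nhds_iff.1 hUmem
  obtain ⟨V₁, hV₁, W, hW, hVW⟩ := mem_nhds_prod_iff.1 (e.open_source.mem_nhds hsrc)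
  have hgc : Continuous (fun v : P5' => ((v, 0) : XX' N)) := continuous_id.prodMk continuous_const
  have hsc : ContinuousAt (e.symm : XX' N → XX' N) (apt N) := by
    apply e.symm.continuousAt
    rwa [OpenPartialHomeomorph.symm_source]
  have hsVW : (e.symm : XX' N → XX' N) ⁻¹' (V₁ ×ˢ W) ∈ nhds (apt N) := by
    apply hsc.preimage_mem_nhds
    rw [hsa]
    exact prod_mem_nhds hV₁ hW
  refine ⟨V₁ ∩ (fun v : P5' => ((v, 0) : XX' N)) ⁻¹'
      (e.target ∩ U' ∩ (e.symm : XX' N → XX' N) ⁻¹' (V₁ ×ˢ W)), ?_, W, hW, 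
      fun v => (e.symm ((v, 0) : XX' N)).2, ?_, ?_, ?_⟩
  · refine Filter.inter_mem hV₁ (hgc.continuousAt.preimage_mem_nhds ?_)
    exact Filter.inter_mem (Filter.inter_mem (e.open_target.mem_nhds htgt)
      (hU'open.mem_nhds hU'mem)) hsVW
  · -- ContDiffOn
    have h1 : ContDiff ℝ (⊤ : ℕ∞) (fun v : P5' => ((v, 0) : XX' N)) := contDiff_id.prodMk contDiff_const
    refine contDiff_snd.comp_contDiffOn ((hUs.mono hU'sub).comp h1.contDiffOn ?_)
    intro v hv
    exact hv.2.1.2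
  · -- value at base point
    show (e.symm (apt N)).2 = 0
    rw [hsa]; rfl
  · rintro v ⟨hv1, hv2⟩
    set x := e.symm ((v, 0) : XX' N) with hx
    have hvt : ((v, 0) : XX' N) ∈ e.target := hv2.1.1
    have hxsrc : x ∈ e.source := e.map_target hvt
    have hxVW : x ∈ V₁ ×ˢ W := hv2.2
    have hex : Gmap N x = ((v, 0) : XX' N) := by
      rw [← hcoe]; exact e.right_inv hvt
    have hx1 : x.1 = v := congrArg Prod.fst hex
    have hx2 : Fmap N x.1.1 x.1.2.1 x.1.2.2.1 x.1.2.2.2.1 x.1.2.2.2.2 x.2 = 0 :=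
      congrArg Prod.snd hex
    rw [hx1] at hx2
    refine ⟨hxVW.2, hx2, ?_⟩
    intro u hu hFu
    have hGvu : Gmap N ((v, u) : XX' N) = ((v, 0) : XX' N) := by
      unfold Gmap; exact Prod.ext rfl hFu
    have hvusrc : ((v, u) : XX' N) ∈ e.source := hVW (Set.mk_mem_prod hv1 hu)
    have : ((v, u) : XX' N) = x := by
      apply e.injOn hvusrc hxsrc
      rw [hcoe, hGvu, hex]
    exact congrArg Prod.snd this
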